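/- Let q be a prime power. The subgroup of PGL(3,q³) consisting of the homographies of PG(2,q³) that stabilize the line ℓ∞ acts transitively on the set of all tangent splashes of ℓ∞. -/

import Mathlib

/-!
Write a tangent subplane as `π = g(PG(2,F))`. The line `g⁻¹(ℓ∞)` has an equation
`a₀x₀ + a₁x₁ + a₂x₂ = 0` with `aᵢ ∈ K`; restricted to `F³` this is an `F`-linear map
`F³ → K` whose kernel gives the points of `PG(2,F)` on the line, so tangency forces its image
`⟨a₀, a₁, a₂⟩_F` to be a plane in the cubic extension `K/F`. Any two `F`-planes of `K` differ by
multiplication by some `l ∈ Kˣ`, and two linear maps with the same image differ by an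
automorphism of the source. So some `e ∈ GL(3,F)` carries the equation of `g₁⁻¹(ℓ∞)`, times `l`,
to that of `g₂⁻¹(ℓ∞)`, and `g₂ ∘ e ∘ g₁⁻¹` fixes `ℓ∞` and maps `π₁` onto `π₂`; homographies
fixing `ℓ∞` commute with taking splashes.
-/

namespace TangentSplashPaper

open Projectivization

/-- The point set of the projective plane `PG(2,K)`. -/
abbrev PGPoint (K : Type*) [Field K] := Projectivization K (Fin 3 → K)

/-- `ℓ` is a line of `PG(2,K)`: the set of points lying in a fixed
2-dimensional linear subspace. -/
def IsLine {K : Type*} [Field K] (ℓ : Set (PGPoint K)) : Prop :=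
  ∃ W : Submodule K (Fin 3 → K), Module.finrank K W = 2 ∧
    ℓ = {P : PGPoint K | P.submodule ≤ W}

/-- The distinguished line `ℓ∞` of `PG(2,K)`: points whose last homogeneous
coordinate vanishes. -/
def linf (K : Type*) [Field K] : Set (PGPoint K) := {P : PGPoint K | P.rep 2 = 0}

/-- The homography of `PG(2,K)` induced by a linear automorphism of `K³`;
as maps of point sets, these are exactly the elements of `PGL(3,K)`. -/
def hmap {K : Type*} [Field K] (f : (Fin 3 → K) ≃ₗ[K] (Fin 3 → K)) :
    PGPoint K → PGPoint K :=
  Projectivization.map f.toLinearMap f.injective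

/-- The base subplane `PG(2,F)`: points admitting homogeneous coordinates in
the subfield `F`. -/
def basePlane (F K : Type*) [Field F] [Field K] [Algebra F K] : Set (PGPoint K) :=
  {P : PGPoint K | ∃ v : Fin 3 → K, ∃ hv : v ≠ 0, P = Projectivization.mk K v hv ∧
    ∀ i, v i ∈ (algebraMap F K).range}

/-- An order-`q`-subplane of `PG(2,K)` (`q = |F|`): an image of `PG(2,F)`
under a homography. -/
def IsSubplane (F : Type*) {K : Type*} [Field F] [Field K] [Algebra F K]
    (S : Set (PGPoint K)) : Prop :=
  ∃ f : (Fin 3 → K) ≃ₗ[K] (Fin 3 → K), S = hmap f '' basePlane F K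

/-- An order-`q`-subline of `PG(2,K)`: the intersection of an order-`q`-subplane
with a line of `PG(2,K)` meeting it in `q+1` points. -/
def IsSubline (F : Type*) {K : Type*} [Field F] [Field K] [Algebra F K] (q : ℕ)
    (b : Set (PGPoint K)) : Prop :=
  ∃ S ℓ : Set (PGPoint K), IsSubplane F S ∧ IsLine ℓ ∧
    (S ∩ ℓ).ncard = q + 1 ∧ b = S ∩ ℓ

/-- The splash of a subplane `π` on `ℓ∞`: all points of `ℓ∞` lying on a line
of `PG(2,K)` spanned by two points of `π`. -/
def splash {K : Type*} [Field K] (π : Set (PGPoint K)) : Set (PGPoint K) :=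
  {X : PGPoint K | X ∈ linf K ∧ ∃ P Q : PGPoint K, P ∈ π ∧ Q ∈ π ∧ P ≠ Q ∧
    ∃ ℓ : Set (PGPoint K), IsLine ℓ ∧ P ∈ ℓ ∧ Q ∈ ℓ ∧ X ∈ ℓ}

/-- `S` is a tangent splash of `ℓ∞` with centre `T`: `S` is the splash of some
order-`q`-subplane meeting `ℓ∞` exactly in the point `T`. -/
def IsTangentSplash (F : Type*) {K : Type*} [Field F] [Field K] [Algebra F K]
    (S : Set (PGPoint K)) (T : PGPoint K) : Prop :=
  ∃ π : Set (PGPoint K), IsSubplane F π ∧ π ∩ linf K = {T} ∧ S = splash π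

/-- The set `t_P`: points of `ℓ∞` lying on the extension of a line of the
subplane `π` through the point `P` (lines of `π` are the lines of `PG(2,K)`
meeting `π` in `q+1` points). -/
def pencilTrace {K : Type*} [Field K] (q : ℕ) (π : Set (PGPoint K))
    (P : PGPoint K) : Set (PGPoint K) :=
  {X : PGPoint K | X ∈ linf K ∧ ∃ ℓ : Set (PGPoint K), IsLine ℓ ∧ P ∈ ℓ ∧
    (π ∩ ℓ).ncard = q + 1 ∧ X ∈ ℓ}

open Module

section Homography

variable {K : Type*} [Field K]

lemma hmap_mk (f : (Fin 3 → K) ≃ₗ[K] (Fin 3 → K)) (v : Fin 3 → K) (hv : v ≠ 0) :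
    hmap f (mk K v hv) = mk K (f v) (by simpa using hv) :=
  rfl

lemma hmap_trans (f g : (Fin 3 → K) ≃ₗ[K] (Fin 3 → K)) :
    hmap (f.trans g) = hmap g ∘ hmap f :=
  Projectivization.map_comp f.toLinearMap f.injective g.toLinearMap g.injective _

lemma hmap_symm_hmap (f : (Fin 3 → K) ≃ₗ[K] (Fin 3 → K)) (P : PGPoint K) :
    hmap f.symm (hmap f P) = P := by
  induction P using Projectivization.ind with
  | h v hv => simp [hmap_mk]

lemma hmap_hmap_symm (f : (Fin 3 → K) ≃ₗ[K] (Fin 3 → K)) (P : PGPoint K) :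
    hmap f (hmap f.symm P) = P :=
  hmap_symm_hmap f.symm P

lemma hmap_injective (f : (Fin 3 → K) ≃ₗ[K] (Fin 3 → K)) : Function.Injective (hmap f) :=
  Function.LeftInverse.injective (hmap_symm_hmap f)

lemma image_hmap (f : (Fin 3 → K) ≃ₗ[K] (Fin 3 → K)) (s : Set (PGPoint K)) :
    hmap f '' s = hmap f.symm ⁻¹' s :=
  congrFun (Set.image_eq_preimage_of_inverse (hmap_symm_hmap f) (hmap_hmap_symm f)) s

lemma image_hmap_of_preimage_eq {f : (Fin 3 → K) ≃ₗ[K] (Fin 3 → K)} {s : Set (PGPoint K)}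
    (h : hmap f ⁻¹' s = s) : hmap f '' s = s := by
  conv_lhs => rw [← h]
  exact Function.RightInverse.surjective (hmap_hmap_symm f) |>.image_preimage s

lemma preimage_hmap_symm_of_preimage_eq {f : (Fin 3 → K) ≃ₗ[K] (Fin 3 → K)}
    {s : Set (PGPoint K)} (h : hmap f ⁻¹' s = s) : hmap f.symm ⁻¹' s = s := by
  rw [← image_hmap, image_hmap_of_preimage_eq h]

lemma mk_mem_linf_iff {v : Fin 3 → K} (hv : v ≠ 0) : mk K v hv ∈ linf K ↔ v 2 = 0 := by
  obtain ⟨a, ha⟩ := exists_smul_eq_mk_rep K v hv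
  simp [linf, ← ha, Units.smul_def, a.ne_zero]

lemma preimage_hmap_linf_of_apply_two_eq {f : (Fin 3 → K) ≃ₗ[K] (Fin 3 → K)} {l : K}
    (hl : l ≠ 0) (hf : ∀ v, f v 2 = l * v 2) : hmap f ⁻¹' linf K = linf K := by
  ext P
  induction P using Projectivization.ind with
  | h v hv => simp only [Set.mem_preimage, hmap_mk, mk_mem_linf_iff, hf, mul_eq_zero, hl, false_or]

lemma isLine_image (f : (Fin 3 → K) ≃ₗ[K] (Fin 3 → K)) {ℓ : Set (PGPoint K)} (h : IsLine ℓ) :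
    IsLine (hmap f '' ℓ) := by
  obtain ⟨W, hW, rfl⟩ := h
  refine ⟨W.map (f : (Fin 3 → K) →ₗ[K] (Fin 3 → K)), by rwa [LinearEquiv.finrank_map_eq], ?_⟩
  ext Q
  induction Q using Projectivization.ind with
  | h w hw =>
    simp only [image_hmap, Set.mem_preimage, Set.mem_ofPred_eq, hmap_mk, submodule_mk,
      Submodule.span_singleton_le_iff_mem, Submodule.mem_map_equiv]

lemma image_splash_subset {f : (Fin 3 → K) ≃ₗ[K] (Fin 3 → K)} (hf : hmap f ⁻¹' linf K = linf K)
    (π : Set (PGPoint K)) : hmap f '' splash π ⊆ splash (hmap f '' π) := by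
  rintro _ ⟨X, ⟨hX, P, Q, hP, hQ, hPQ, ℓ, hℓ, hPℓ, hQℓ, hXℓ⟩, rfl⟩
  exact ⟨(hf.symm ▸ hX : X ∈ hmap f ⁻¹' linf K), hmap f P, hmap f Q, ⟨P, hP, rfl⟩,
    ⟨Q, hQ, rfl⟩, (hmap_injective f).ne hPQ, hmap f '' ℓ, isLine_image f hℓ,
    ⟨P, hPℓ, rfl⟩, ⟨Q, hQℓ, rfl⟩, ⟨X, hXℓ, rfl⟩⟩

lemma image_splash {f : (Fin 3 → K) ≃ₗ[K] (Fin 3 → K)} (hf : hmap f ⁻¹' linf K = linf K)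
    (π : Set (PGPoint K)) : hmap f '' splash π = splash (hmap f '' π) := by
  refine (image_splash_subset hf π).antisymm fun X hX => ?_
  have hX' := image_splash_subset (preimage_hmap_symm_of_preimage_eq hf) _ ⟨X, hX, rfl⟩
  simp only [Set.image_image, hmap_symm_hmap, Set.image_id'] at hX'
  exact ⟨_, hX', hmap_hmap_symm f X⟩

end Homography

section Subplane

variable (F K : Type*) [Field F] [Field K] [Algebra F K] (ι : Type*)

def inclPi : (ι → F) →ₗ[F] (ι → K) :=
  (Algebra.linearMap F K).compLeft ι

variable {F K ι}

@[simp]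
lemma inclPi_apply (c : ι → F) (i : ι) : inclPi F K ι c i = algebraMap F K (c i) :=
  rfl

lemma inclPi_injective : Function.Injective (inclPi F K ι) :=
  fun _ _ h => funext fun i => (algebraMap F K).injective (congrFun h i)

lemma inclPi_ne_zero {c : ι → F} (hc : c ≠ 0) : inclPi F K ι c ≠ 0 := by
  simpa using (inclPi_injective (K := K)).ne hc

lemma inclPi_single [DecidableEq ι] (i : ι) : inclPi F K ι (Pi.single i 1) = Pi.single i 1 := by
  ext j
  by_cases h : j = i <;> simp [h]

variable (F) in
lemma ext_inclPi [Fintype ι] [DecidableEq ι] {M : Type*} [AddCommMonoid M] [Module K M]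
    {φ ψ : (ι → K) →ₗ[K] M} (h : ∀ c, φ (inclPi F K ι c) = ψ (inclPi F K ι c)) : φ = ψ :=
  (Pi.basisFun K ι).ext fun i => by simpa [inclPi_single] using h (Pi.single i 1)

lemma exists_smul_eq_of_mk_inclPi_eq {c d : ι → F} (hc : c ≠ 0) (hd : d ≠ 0)
    (h : mk K (inclPi F K ι c) (inclPi_ne_zero hc) = mk K (inclPi F K ι d) (inclPi_ne_zero hd)) :
    ∃ s : F, s • d = c := by
  obtain ⟨a, ha⟩ := (mk_eq_mk_iff' K _ _ _ _).1 h
  obtain ⟨i, hi⟩ := Function.ne_iff.1 hd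
  have hai : a = algebraMap F K (c i / d i) := by
    have := congrFun ha i
    simp only [Pi.smul_apply, smul_eq_mul, inclPi_apply] at this
    rw [map_div₀, ← this, mul_div_cancel_right₀ _ (by simpa using hi)]
  refine ⟨c i / d i, inclPi_injective (K := K) ?_⟩
  rw [map_smul, ← algebraMap_smul K, ← hai, ha]

lemma mem_basePlane_iff {P : PGPoint K} :
    P ∈ basePlane F K ↔
      ∃ (c : Fin 3 → F) (hc : c ≠ 0), P = mk K (inclPi F K _ c) (inclPi_ne_zero hc) := by
  constructor
  · rintro ⟨v, hv, rfl, hcoord⟩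
    choose c hc using hcoord
    obtain rfl : inclPi F K _ c = v := funext hc
    exact ⟨c, fun h => hv (by simp [h]), rfl⟩
  · rintro ⟨c, hc, rfl⟩
    exact ⟨_, _, rfl, fun i => ⟨c i, rfl⟩⟩

variable [Fintype ι] [DecidableEq ι]

noncomputable def extendScalars (e : (ι → F) ≃ₗ[F] (ι → F)) : (ι → K) ≃ₗ[K] (ι → K) :=
  LinearEquiv.ofLinearMap
    (Matrix.toLin' ((LinearMap.toMatrix' e.toLinearMap).map (algebraMap F K)))
    (Matrix.toLin' ((LinearMap.toMatrix' e.symm.toLinearMap).map (algebraMap F K)))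
    (by rw [← Matrix.toLin'_mul, ← Matrix.map_mul, ← LinearMap.toMatrix'_comp]; simp)
    (by rw [← Matrix.toLin'_mul, ← Matrix.map_mul, ← LinearMap.toMatrix'_comp]; simp)

lemma extendScalars_inclPi (e : (ι → F) ≃ₗ[F] (ι → F)) (c : ι → F) :
    extendScalars e (inclPi F K ι c) = inclPi F K ι (e c) := by
  have he : e c = Matrix.mulVec (LinearMap.toMatrix' e.toLinearMap) c :=
    (LinearMap.toMatrix'_mulVec _ c).symm
  ext i
  rw [inclPi_apply, he, RingHom.map_mulVec]
  rfl

lemma image_extendScalars_basePlane (e : (Fin 3 → F) ≃ₗ[F] (Fin 3 → F)) :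
    hmap (extendScalars e) '' basePlane F K = basePlane F K := by
  ext Q
  constructor
  · rintro ⟨P, hP, rfl⟩
    obtain ⟨c, hc, rfl⟩ := mem_basePlane_iff.1 hP
    exact mem_basePlane_iff.2 ⟨e c, by simpa using hc, by simp [hmap_mk, extendScalars_inclPi]⟩
  · intro hQ
    obtain ⟨c, hc, rfl⟩ := mem_basePlane_iff.1 hQ
    refine ⟨_, mem_basePlane_iff.2 ⟨e.symm c, by simpa using hc, rfl⟩, ?_⟩
    simp [hmap_mk, extendScalars_inclPi]

end Subplane

section Tangent

variable (F : Type*) {K : Type*} [Field F] [Field K] [Algebra F K]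

def linfEquation (g : (Fin 3 → K) ≃ₗ[K] (Fin 3 → K)) : (Fin 3 → F) →ₗ[F] K :=
  ((LinearMap.proj 2).comp g.toLinearMap).restrictScalars F ∘ₗ inclPi F K (Fin 3)

variable {F}

lemma linfEquation_apply (g : (Fin 3 → K) ≃ₗ[K] (Fin 3 → K)) (c : Fin 3 → F) :
    linfEquation F g c = g (inclPi F K _ c) 2 :=
  rfl

lemma hmap_mk_inclPi_mem_linf_iff (g : (Fin 3 → K) ≃ₗ[K] (Fin 3 → K)) {c : Fin 3 → F}
    (hc : c ≠ 0) : hmap g (mk K (inclPi F K _ c) (inclPi_ne_zero hc)) ∈ linf K ↔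
      linfEquation F g c = 0 := by
  rw [hmap_mk, mk_mem_linf_iff, linfEquation_apply]

lemma finrank_range_linfEquation_of_tangent {g : (Fin 3 → K) ≃ₗ[K] (Fin 3 → K)} {T : PGPoint K}
    (htan : hmap g '' basePlane F K ∩ linf K = {T}) :
    finrank F (LinearMap.range (linfEquation F g)) = 2 := by
  obtain ⟨⟨P, hP, rfl⟩, hT⟩ : T ∈ hmap g '' basePlane F K ∩ linf K := htan ▸ rfl
  obtain ⟨c, hc, rfl⟩ := mem_basePlane_iff.1 hP
  have hc_ker : c ∈ LinearMap.ker (linfEquation F g) := (hmap_mk_inclPi_mem_linf_iff g hc).1 hT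
  have hker : finrank F (LinearMap.ker (linfEquation F g)) = 1 := by
    refine (finrank_eq_one_iff_of_nonzero' ⟨c, hc_ker⟩ (by simpa using hc)).2 ?_
    rintro ⟨d, hd⟩
    by_cases hd0 : d = 0
    · exact ⟨0, Subtype.ext (by simp [hd0])⟩
    have hdT : hmap g (mk K (inclPi F K _ d) (inclPi_ne_zero hd0)) ∈
        hmap g '' basePlane F K ∩ linf K :=
      ⟨⟨_, mem_basePlane_iff.2 ⟨d, hd0, rfl⟩, rfl⟩, (hmap_mk_inclPi_mem_linf_iff g hd0).2 hd⟩
    rw [htan] at hdT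
    obtain ⟨s, hs⟩ := exists_smul_eq_of_mk_inclPi_eq hd0 hc (hmap_injective g hdT)
    exact ⟨s, Subtype.ext hs⟩
  have := (linfEquation F g).finrank_range_add_finrank_ker
  rw [hker, finrank_fin_fun] at this
  omega

end Tangent

section Linear

variable {F : Type*} [Field F]

lemma exists_map_mulLeft_eq {K : Type*} [Field K] [Algebra F K] [FiniteDimensional F K]
    {V₁ V₂ : Submodule F K} (h₁ : finrank F V₁ + 1 = finrank F K)
    (h₂ : finrank F V₂ + 1 = finrank F K) :
    ∃ l : K, l ≠ 0 ∧ V₁.map (LinearMap.mulLeft F l) = V₂ := by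
  -- `ker Φ = {l | l • V₁ ≤ V₂}`, nonzero because `Φ` lands in a space of dimension `dim V₁`
  let Φ : K →ₗ[F] V₁ →ₗ[F] K ⧸ V₂ := ((LinearMap.mul F K).compl₂ V₁.subtype).compr₂ V₂.mkQ
  have hΦ : finrank F (V₁ →ₗ[F] K ⧸ V₂) < finrank F K := by
    have := V₂.finrank_quotient_add_finrank
    rw [finrank_linearMap]
    nlinarith
  obtain ⟨l, hl_ker, hl⟩ :=
    (Submodule.ne_bot_iff _).1 (LinearMap.ker_ne_bot_of_finrank_lt (f := Φ) hΦ)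
  have hle : V₁.map (LinearMap.mulLeft F l) ≤ V₂ := by
    rintro _ ⟨v, hv, rfl⟩
    simpa [Φ, Submodule.Quotient.mk_eq_zero] using LinearMap.congr_fun hl_ker ⟨v, hv⟩
  refine ⟨l, hl, Submodule.eq_of_le_of_finrank_le hle ?_⟩
  rw [← (Submodule.equivMapOfInjective _ (mul_right_injective₀ hl) V₁).finrank_eq]
  omega

lemma exists_linearEquiv_comp_eq {V W : Type*} [AddCommGroup V] [Module F V]
    [FiniteDimensional F V] [AddCommGroup W] [Module F W] {α β : V →ₗ[F] W}
    (h : LinearMap.range α = LinearMap.range β) : ∃ e : V ≃ₗ[F] V, β ∘ₗ e = α := by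
  obtain ⟨s, hs⟩ := β.rangeRestrict.exists_rightInverse_of_surjective β.range_rangeRestrict
  let α' : V →ₗ[F] LinearMap.range β :=
    α.codRestrict _ fun x => h ▸ LinearMap.mem_range_self α x
  obtain ⟨C, hC⟩ := (LinearMap.ker α).exists_isCompl
  let κ : LinearMap.ker α ≃ₗ[F] LinearMap.ker β := LinearEquiv.ofFinrankEq _ _ <| by
    have hα := α.finrank_range_add_finrank_ker
    have hβ := β.finrank_range_add_finrank_ker
    rw [h] at hα
    omega
  -- `e` lifts `α` through the section `s` of `β` and matches `ker α` with `ker β` via `κ`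
  let e : V →ₗ[F] V := s ∘ₗ α' +
    (LinearMap.ker β).subtype ∘ₗ κ.toLinearMap ∘ₗ (LinearMap.ker α).projectionOnto C hC
  have hβe : β ∘ₗ e = α := by
    ext x
    have hx : β (s (α' x)) = α x := congrArg Subtype.val (LinearMap.congr_fun hs (α' x))
    simp [e, hx]
  have he : Function.Injective e := by
    rw [← LinearMap.ker_eq_bot, Submodule.eq_bot_iff]
    intro z hz
    have hαz : z ∈ LinearMap.ker α := by
      rw [LinearMap.mem_ker, ← hβe, LinearMap.comp_apply, LinearMap.mem_ker.1 hz, map_zero]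
    have hα'z : α' z = 0 := Subtype.ext hαz
    have hpz : (LinearMap.ker α).projectionOnto C hC z = ⟨z, hαz⟩ :=
      Submodule.projectionOnto_apply_left hC ⟨z, hαz⟩
    simpa [e, hα'z, hpz] using hz
  exact ⟨LinearEquiv.ofInjectiveEndo e he, hβe⟩

end Linear

section Transitivity

variable {F K : Type*} [Field F] [Field K] [Algebra F K]

lemma apply_two_extendScalars {g₁ g₂ : (Fin 3 → K) ≃ₗ[K] (Fin 3 → K)}
    {e : (Fin 3 → F) ≃ₗ[F] (Fin 3 → F)} {l : K}
    (he : linfEquation F g₂ ∘ₗ e = LinearMap.mulLeft F l ∘ₗ linfEquation F g₁)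
    (v : Fin 3 → K) : g₂ (extendScalars e v) 2 = l * g₁ v 2 := by
  have hφ : (LinearMap.proj 2 ∘ₗ g₂.toLinearMap ∘ₗ (extendScalars e).toLinearMap) =
      l • (LinearMap.proj 2 ∘ₗ g₁.toLinearMap) :=
    ext_inclPi F fun c => by
      simpa [extendScalars_inclPi, linfEquation_apply] using LinearMap.congr_fun he c
  simpa using LinearMap.congr_fun hφ v

theorem exists_homography_of_tangent [FiniteDimensional F K] (hK : finrank F K = 3)
    {g₁ g₂ : (Fin 3 → K) ≃ₗ[K] (Fin 3 → K)} {T₁ T₂ : PGPoint K}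
    (h₁ : hmap g₁ '' basePlane F K ∩ linf K = {T₁})
    (h₂ : hmap g₂ '' basePlane F K ∩ linf K = {T₂}) :
    ∃ f : (Fin 3 → K) ≃ₗ[K] (Fin 3 → K), hmap f ⁻¹' linf K = linf K ∧
      hmap f '' (hmap g₁ '' basePlane F K) = hmap g₂ '' basePlane F K := by
  obtain ⟨l, hl, hV⟩ := exists_map_mulLeft_eq
    (by rw [finrank_range_linfEquation_of_tangent h₁, hK])
    (by rw [finrank_range_linfEquation_of_tangent h₂, hK])
  obtain ⟨e, he⟩ := exists_linearEquiv_comp_eq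
    (α := LinearMap.mulLeft F l ∘ₗ linfEquation F g₁) (β := linfEquation F g₂)
    (by rw [LinearMap.range_comp, hV])
  have hcomp : g₁.trans (g₁.symm.trans ((extendScalars e).trans g₂)) =
      (extendScalars e).trans g₂ := by
    ext v
    simp
  refine ⟨g₁.symm.trans ((extendScalars e).trans g₂),
    preimage_hmap_linf_of_apply_two_eq hl fun v => ?_, ?_⟩
  · simpa using apply_two_extendScalars he (g₁.symm v)
  · rw [← Set.image_comp, ← hmap_trans, hcomp, hmap_trans, Set.image_comp,
      image_extendScalars_basePlane]

end Transitivity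

lemma finrank_eq_of_card_eq_pow {F K : Type*} [Field F] [Field K] [Fintype F] [Fintype K]
    [Algebra F K] {q n : ℕ} (hF : Fintype.card F = q) (hK : Fintype.card K = q ^ n) :
    finrank F K = n := by
  have hq : 2 ≤ q := hF ▸ Fintype.one_lt_card
  have hcard := Module.card_eq_pow_finrank (K := F) (V := K)
  rw [hF, hK] at hcard
  exact Nat.pow_right_injective hq hcard.symm

/-- the subgroup of `PGL(3,q³)` stabilising `ℓ∞` is transitive on the
tangent splashes of `ℓ∞`. -/
theorem statement5 (q : ℕ) (F K : Type) [Field F] [Field K] [Fintype F] [Fintype K]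
    [Algebra F K] (hF : Fintype.card F = q) (hK : Fintype.card K = q ^ 3)
    (S₁ S₂ : Set (PGPoint K))
    (hS₁ : ∃ T : PGPoint K, IsTangentSplash F S₁ T)
    (hS₂ : ∃ T : PGPoint K, IsTangentSplash F S₂ T) :
    ∃ f : (Fin 3 → K) ≃ₗ[K] (Fin 3 → K),
      hmap f '' linf K = linf K ∧ hmap f '' S₁ = S₂ := by
  obtain ⟨T₁, _, ⟨g₁, rfl⟩, h₁, rfl⟩ := hS₁
  obtain ⟨T₂, _, ⟨g₂, rfl⟩, h₂, rfl⟩ := hS₂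
  obtain ⟨f, hf_linf, hf_plane⟩ :=
    exists_homography_of_tangent (finrank_eq_of_card_eq_pow hF hK) h₁ h₂
  exact ⟨f, image_hmap_of_preimage_eq hf_linf, by rw [image_splash hf_linf, hf_plane]⟩

end TangentSplashPaper
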